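/- Let G be a communication graph with token assignment identically 0 (no tokens in any pool). For any vertex v of G, if there exists a colouring sequence that colours v green, then there does not exist a maximal colouring sequence that deadlocks before colouring v green; i.e., every maximal colouring sequence colours v green. -/

import Mathlib

/-! Formal framework: communication graphs and the red/yellow/green colouring game
(Brodsky–Pedersen–Wagner, "On the Complexity of Buffer Allocation in Message Passing Systems"),
with receive-side token pools. -/

inductive Colour : Type
  | red | yellow | green
deriving DecidableEq

/-- A communication graph: vertices are partitioned into start/send/receive/end vertices,
`pred u v` means `u` is the component predecessor of `v` (a process arc `u → v`),
`matched u v` is a communication arc from send `u` to its matching receive `v`,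
`comp v` is the index of the process component of `v`, and `pos v` is the position
of `v` within its component chain. -/
structure CommGraph (V : Type) where
  isStart : V → Prop
  isSend : V → Prop
  isRecv : V → Prop
  isEnd : V → Prop
  pred : V → V → Prop
  matched : V → V → Prop
  comp : V → ℕ
  pos : V → ℕ

namespace CommGraph

variable {V : Type}

/-- An arc of the communication graph (process arc or communication arc). -/
def GArc (G : CommGraph V) (u v : V) : Prop := G.pred u v ∨ G.matched u v

/-- Well-formedness of a communication graph: the vertex kinds partition `V`,
components are chains (unique predecessors, positions increase along process arcs),
communication arcs go from sends to receives in different components and form a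
partial matching, and the graph is acyclic (arcs admit no infinite descent). -/
structure WF (G : CommGraph V) : Prop where
  kinds : ∀ v, G.isStart v ∨ G.isSend v ∨ G.isRecv v ∨ G.isEnd v
  start_not_send : ∀ v, G.isStart v → ¬ G.isSend v
  start_not_recv : ∀ v, G.isStart v → ¬ G.isRecv v
  start_not_end : ∀ v, G.isStart v → ¬ G.isEnd v
  send_not_recv : ∀ v, G.isSend v → ¬ G.isRecv v
  send_not_end : ∀ v, G.isSend v → ¬ G.isEnd v
  recv_not_end : ∀ v, G.isRecv v → ¬ G.isEnd v
  pred_unique : ∀ {u u' v}, G.pred u v → G.pred u' v → u = u'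
  pred_comp : ∀ {u v}, G.pred u v → G.comp u = G.comp v
  pred_pos : ∀ {u v}, G.pred u v → G.pos v = G.pos u + 1
  start_no_pred : ∀ {u v}, G.pred u v → ¬ G.isStart v
  has_pred : ∀ v, ¬ G.isStart v → ∃ u, G.pred u v
  matched_send : ∀ {u v}, G.matched u v → G.isSend u
  matched_recv : ∀ {u v}, G.matched u v → G.isRecv v
  matched_comp : ∀ {u v}, G.matched u v → G.comp u ≠ G.comp v
  matched_unique_left : ∀ {u u' v}, G.matched u v → G.matched u' v → u = u'
  matched_unique_right : ∀ {u v v'}, G.matched u v → G.matched u v' → v = v'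
  send_has_match : ∀ v, G.isSend v → ∃ w, G.matched v w
  recv_has_match : ∀ v, G.isRecv v → ∃ w, G.matched w v
  dag : WellFounded fun u v => G.GArc u v

end CommGraph

/-- A state of the colouring game: the colouring, which receive vertices currently
hold a token on their incident communication arc, and the number of available
tokens in each (per-process, receive-side) pool. -/
structure St (V : Type) where
  col : V → Colour
  tok : V → Bool
  pool : ℕ → ℕ

/-- The names of the colouring rules. -/
inductive Rule : Type
  | sendYel | recvYel | recvYelTok | sendGrn | recvGrn | endYel | endGrn
deriving DecidableEq

variable {V : Type}

/-- One move of the colouring game (receive-side buffering: the token used by the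
buffered-receive rule `recvYelTok` comes from the pool of the receiving component,
and is returned when the receive turns green). -/
inductive Step [DecidableEq V] (G : CommGraph V) : Rule → St V → St V → Prop
  | sendYel {s : St V} {v u : V} :
      G.isSend v → s.col v = .red → G.pred u v → s.col u = .green →
      Step G .sendYel s ⟨Function.update s.col v .yellow, s.tok, s.pool⟩
  | recvYel {s : St V} {v u w : V} :
      G.isRecv v → s.col v = .red → G.matched w v → s.col w = .yellow →
      G.pred u v → s.col u = .green →
      Step G .recvYel s ⟨Function.update s.col v .yellow, s.tok, s.pool⟩
  | recvYelTok {s : St V} {v w : V} :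
      G.isRecv v → s.col v = .red → G.matched w v → s.col w = .yellow →
      0 < s.pool (G.comp v) →
      Step G .recvYelTok s ⟨Function.update s.col v .yellow,
        Function.update s.tok v true,
        Function.update s.pool (G.comp v) (s.pool (G.comp v) - 1)⟩
  | sendGrn {s : St V} {v r : V} :
      G.isSend v → s.col v = .yellow → G.matched v r → s.col r = .yellow →
      Step G .sendGrn s ⟨Function.update s.col v .green, s.tok, s.pool⟩
  | recvGrn {s : St V} {v u w : V} :
      G.isRecv v → s.col v = .yellow → G.pred u v → s.col u = .green →
      G.matched w v → s.col w = .green →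
      Step G .recvGrn s ⟨Function.update s.col v .green,
        Function.update s.tok v false,
        if s.tok v then
          Function.update s.pool (G.comp v) (s.pool (G.comp v) + 1)
        else s.pool⟩
  | endYel {s : St V} {v u : V} :
      G.isEnd v → s.col v = .red → G.pred u v → s.col u = .green →
      Step G .endYel s ⟨Function.update s.col v .yellow, s.tok, s.pool⟩
  | endGrn {s : St V} {v : V} :
      G.isEnd v → s.col v = .yellow →
      Step G .endGrn s ⟨Function.update s.col v .green, s.tok, s.pool⟩

/-- `IsSeq G s l` : the list `l` of (rule, state) pairs is a valid colouring sequence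
starting from state `s`. -/
def IsSeq [DecidableEq V] (G : CommGraph V) : St V → List (Rule × St V) → Prop
  | _, [] => True
  | s, p :: l => Step G p.1 s p.2 ∧ IsSeq G p.2 l

/-- The list of states visited by a colouring sequence. -/
def states (s0 : St V) (l : List (Rule × St V)) : List (St V) :=
  s0 :: l.map Prod.snd

/-- The final state of a colouring sequence. -/
def finalSt (s0 : St V) (l : List (Rule × St V)) : St V :=
  (states s0 l).getLast (by simp [states])

open Classical in
/-- The initial state: start vertices green, all others red, no tokens placed,
token pools given by the token assignment `B` (pool of component `i` holds `B i`). -/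
noncomputable def init (G : CommGraph V) (B : ℕ → ℕ) : St V :=
  ⟨fun v => if G.isStart v then Colour.green else Colour.red, fun _ => false, B⟩

/-- A state from which no colouring rule applies. -/
def MaximalFrom [DecidableEq V] (G : CommGraph V) (s : St V) : Prop :=
  ∀ ρ t, ¬ Step G ρ s t

/-- A state is complete when every vertex is green. -/
def Completes (s : St V) : Prop := ∀ v, s.col v = Colour.green

/-- A deadlocking colouring sequence from `s0`: a maximal sequence whose final
colouring has a non-green vertex. -/
def Deadlocks [DecidableEq V] (G : CommGraph V) (s0 : St V) (l : List (Rule × St V)) : Prop :=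
  IsSeq G s0 l ∧ MaximalFrom G (finalSt s0 l) ∧ ¬ Completes (finalSt s0 l)

/-- The system is safe (deadlock free) under token assignment `B`:
every maximal colouring sequence completes. -/
def DeadlockFree [DecidableEq V] (G : CommGraph V) (B : ℕ → ℕ) : Prop :=
  ∀ l, IsSeq G (init G B) l → MaximalFrom G (finalSt (init G B) l) →
    Completes (finalSt (init G B) l)

/-- A state blocks: some yellow send has a matching red receive to which the
buffered-receive rule cannot be applied (no token available). -/
def Blocked (G : CommGraph V) (s : St V) : Prop :=
  ∃ v r, G.matched v r ∧ s.col v = Colour.yellow ∧ s.col r = Colour.red ∧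
    s.pool (G.comp r) = 0

/-- The graph is block free under token assignment `B`: no colouring sequence blocks. -/
def BlockFree [DecidableEq V] (G : CommGraph V) (B : ℕ → ℕ) : Prop :=
  ∀ l, IsSeq G (init G B) l → ¬ Blocked G (finalSt (init G B) l)


/-!
Without tokens the game only ever advances single vertices red → yellow → green, and an
enabled vertex stays enabled when another vertex advances: green vertices never change, and
the only yellow vertices another vertex can wait on are a send waiting for its yellow receive
(which cannot turn green before the send does) and a receive waiting for its yellow send
(which cannot turn green while the receive is still red). Moves at distinct vertices therefore
commute, so the game is confluent (Church–Rosser). A colouring reached by some sequence with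
`v` green and a maximal colouring then have a common successor, which must be the maximal
colouring itself; since green is never lost, `v` is green there.
-/

namespace Colour

def next : Colour → Colour
  | red => yellow
  | yellow => green
  | green => green

end Colour

def advance [DecidableEq V] (c : V → Colour) (v : V) : V → Colour :=
  Function.update c v (c v).next

section Advance

variable [DecidableEq V] {c : V → Colour} {u v : V}

theorem advance_of_ne (h : v ≠ u) : advance c u v = c v :=
  Function.update_of_ne h _ _

theorem advance_eq_green (h : c v = .green) : advance c u v = .green := by
  by_cases hv : v = u
  · subst hv
    simp [advance, h, Colour.next]
  · rw [advance_of_ne hv, h]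

theorem advance_comm (h : u ≠ v) : advance (advance c u) v = advance (advance c v) u := by
  simp only [advance]
  rw [Function.update_of_ne h.symm, Function.update_of_ne h]
  exact Function.update_comm h _ _ _

end Advance

namespace CommGraph

variable {G : CommGraph V} {c c' : V → Colour} {u v w : V}

/-- `v` can change colour by one of the rules that use no token. -/
def Enabled (G : CommGraph V) (c : V → Colour) (v : V) : Prop :=
  (c v = .red ∧ ((G.isSend v ∧ ∃ u, G.pred u v ∧ c u = .green) ∨
    (G.isRecv v ∧ (∃ w, G.matched w v ∧ c w = .yellow) ∧ ∃ u, G.pred u v ∧ c u = .green) ∨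
    (G.isEnd v ∧ ∃ u, G.pred u v ∧ c u = .green))) ∨
  (c v = .yellow ∧ ((G.isSend v ∧ ∃ r, G.matched v r ∧ c r = .yellow) ∨
    (G.isRecv v ∧ (∃ u, G.pred u v ∧ c u = .green) ∧ ∃ w, G.matched w v ∧ c w = .green) ∨
    G.isEnd v))

namespace Enabled

theorem ne_green (h : G.Enabled c v) : c v ≠ .green := by
  rcases h with ⟨h, -⟩ | ⟨h, -⟩ <;> simp [h]

theorem yellow_of_matched_of_send_yellow (hwf : G.WF) (h : G.Enabled c w)
    (hm : G.matched w v) (hw : c w = .yellow) : c v = .yellow := by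
  have hsend := hwf.matched_send hm
  rcases h with ⟨h, -⟩ | ⟨-, ⟨-, r, hr, hry⟩ | ⟨hrecv, -⟩ | hend⟩
  · simp [hw] at h
  · rwa [hwf.matched_unique_right hm hr]
  · exact absurd hrecv (hwf.send_not_recv w hsend)
  · exact absurd hend (hwf.send_not_end w hsend)

theorem green_of_matched_of_recv_yellow (hwf : G.WF) (h : G.Enabled c v)
    (hm : G.matched w v) (hv : c v = .yellow) : c w = .green := by
  have hrecv := hwf.matched_recv hm
  rcases h with ⟨h, -⟩ | ⟨-, ⟨hsend, -⟩ | ⟨-, -, w', hw', hwg⟩ | hend⟩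
  · simp [hv] at h
  · exact absurd hrecv (hwf.send_not_recv v hsend)
  · rwa [hwf.matched_unique_left hm hw']
  · exact absurd hend (hwf.recv_not_end v hrecv)

end Enabled

variable [DecidableEq V]

theorem Enabled.advance (hwf : G.WF) (hu : G.Enabled c u) (hv : G.Enabled c v) (hne : u ≠ v) :
    G.Enabled (_root_.advance c u) v := by
  have keep : ∀ {x}, c x = .green → _root_.advance c u x = c x := fun hx =>
    advance_of_ne fun e => hu.ne_green (e ▸ hx)
  have kv := advance_of_ne (c := c) hne.symm
  rcases hv with ⟨hr, ⟨hs, x, hp, hx⟩ | ⟨hrecv, ⟨w, hm, hw⟩, x, hp, hx⟩ | ⟨he, x, hp, hx⟩⟩ |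
    ⟨hy, ⟨hs, r, hm, hry⟩ | ⟨hrecv, ⟨x, hp, hx⟩, w, hm, hw⟩ | he⟩
  · exact .inl ⟨kv ▸ hr, .inl ⟨hs, x, hp, keep hx ▸ hx⟩⟩
  · have hwu : w ≠ u := by
      rintro rfl
      simp [hu.yellow_of_matched_of_send_yellow hwf hm hw] at hr
    exact .inl ⟨kv ▸ hr, .inr (.inl ⟨hrecv, ⟨w, hm, advance_of_ne hwu ▸ hw⟩,
      x, hp, keep hx ▸ hx⟩)⟩
  · exact .inl ⟨kv ▸ hr, .inr (.inr ⟨he, x, hp, keep hx ▸ hx⟩)⟩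
  · have hru : r ≠ u := by
      rintro rfl
      simp [hu.green_of_matched_of_recv_yellow hwf hm hry] at hy
    exact .inr ⟨kv ▸ hy, .inl ⟨hs, r, hm, advance_of_ne hru ▸ hry⟩⟩
  · exact .inr ⟨kv ▸ hy, .inr (.inl ⟨hrecv, ⟨x, hp, keep hx ▸ hx⟩, w, hm, keep hw ▸ hw⟩)⟩
  · exact .inr ⟨kv ▸ hy, .inr (.inr he)⟩

theorem Enabled.exists_step {s : St V} (h : G.Enabled s.col v) : ∃ ρ t, Step G ρ s t := by
  rcases h with ⟨hr, ⟨hs, u, hp, hu⟩ | ⟨hrecv, ⟨w, hm, hw⟩, u, hp, hu⟩ | ⟨he, u, hp, hu⟩⟩ |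
    ⟨hy, ⟨hs, r, hm, hry⟩ | ⟨hrecv, ⟨u, hp, hu⟩, w, hm, hw⟩ | he⟩
  · exact ⟨_, _, .sendYel hs hr hp hu⟩
  · exact ⟨_, _, .recvYel hrecv hr hm hw hp hu⟩
  · exact ⟨_, _, .endYel he hr hp hu⟩
  · exact ⟨_, _, .sendGrn hs hy hm hry⟩
  · exact ⟨_, _, .recvGrn hrecv hy hp hu hm hw⟩
  · exact ⟨_, _, .endGrn he hy⟩

def Move (G : CommGraph V) (c₀ c₁ : V → Colour) : Prop :=
  ∃ v, G.Enabled c₀ v ∧ c₁ = advance c₀ v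

theorem Move.diamond (hwf : G.WF) (a b c : V → Colour) (hb : G.Move a b) (hc : G.Move a c) :
    ∃ d, Relation.ReflGen G.Move b d ∧ Relation.ReflTransGen G.Move c d := by
  obtain ⟨u, hu, rfl⟩ := hb
  obtain ⟨v, hv, rfl⟩ := hc
  by_cases huv : u = v
  · subst huv
    exact ⟨_, .refl, .refl⟩
  · exact ⟨advance (advance a u) v, .single ⟨v, hu.advance hwf hv huv, rfl⟩,
      .single ⟨u, hv.advance hwf hu (Ne.symm huv), advance_comm huv⟩⟩

theorem green_of_reflTransGen_move (h : Relation.ReflTransGen G.Move c c')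
    (hv : c v = .green) : c' v = .green := by
  induction h with
  | refl => exact hv
  | tail _ hmove ih =>
    obtain ⟨u, -, rfl⟩ := hmove
    exact advance_eq_green ih

end CommGraph

def St.NoTokens (s : St V) : Prop :=
  s.tok = (fun _ => false) ∧ s.pool = (fun _ => 0)

theorem init_zero_noTokens (G : CommGraph V) : (init G fun _ => 0).NoTokens :=
  ⟨rfl, rfl⟩

namespace Step

variable [DecidableEq V] {G : CommGraph V} {ρ : Rule} {s t : St V}

theorem move_of_noTokens (hs : s.NoTokens) (h : Step G ρ s t) :
    G.Move s.col t.col ∧ t.NoTokens := by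
  obtain ⟨htok, hpool⟩ := hs
  cases h with
  | @sendYel _ v u hv hr hp hg =>
    exact ⟨⟨v, .inl ⟨hr, .inl ⟨hv, u, hp, hg⟩⟩, by simp [advance, hr, Colour.next]⟩, htok, hpool⟩
  | @recvYel _ v u w hv hr hm hw hp hg =>
    exact ⟨⟨v, .inl ⟨hr, .inr (.inl ⟨hv, ⟨w, hm, hw⟩, u, hp, hg⟩)⟩,
      by simp [advance, hr, Colour.next]⟩, htok, hpool⟩
  | recvYelTok _ _ _ _ hlt =>
    simp [hpool] at hlt
  | @sendGrn _ v r hv hy hm hr =>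
    exact ⟨⟨v, .inr ⟨hy, .inl ⟨hv, r, hm, hr⟩⟩, by simp [advance, hy, Colour.next]⟩, htok, hpool⟩
  | @recvGrn _ v u w hv hy hp hg hm hw =>
    refine ⟨⟨v, .inr ⟨hy, .inr (.inl ⟨hv, ⟨u, hp, hg⟩, w, hm, hw⟩)⟩,
      by simp [advance, hy, Colour.next]⟩, by simp [htok], by simp [htok, hpool]⟩
  | @endYel _ v u hv hr hp hg =>
    exact ⟨⟨v, .inl ⟨hr, .inr (.inr ⟨hv, u, hp, hg⟩)⟩, by simp [advance, hr, Colour.next]⟩,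
      htok, hpool⟩
  | @endGrn _ v hv hy =>
    exact ⟨⟨v, .inr ⟨hy, .inr (.inr hv)⟩, by simp [advance, hy, Colour.next]⟩, htok, hpool⟩

end Step

theorem finalSt_cons (s : St V) (p : Rule × St V) (l : List (Rule × St V)) :
    finalSt s (p :: l) = finalSt p.2 l := by
  simp [finalSt, states, List.getLast_cons]

theorem IsSeq.reflTransGen_move [DecidableEq V] {G : CommGraph V} :
    ∀ {s : St V} {l : List (Rule × St V)}, s.NoTokens → IsSeq G s l →
      Relation.ReflTransGen G.Move s.col (finalSt s l).col
  | _, [], _, _ => .refl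
  | _, p :: _, hs, ⟨hstep, hrest⟩ => by
    obtain ⟨hmove, ht⟩ := hstep.move_of_noTokens hs
    rw [finalSt_cons]
    exact .head hmove (reflTransGen_move ht hrest)

theorem MaximalFrom.eq_of_reflTransGen_move [DecidableEq V] {G : CommGraph V} {s : St V}
    {c : V → Colour} (hmax : MaximalFrom G s) (h : Relation.ReflTransGen G.Move s.col c) :
    c = s.col := by
  rcases h.cases_head with rfl | ⟨c', ⟨v, hv, -⟩, -⟩
  · rfl
  · obtain ⟨ρ, t, hstep⟩ := hv.exists_step
    exact absurd hstep (hmax ρ t)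

theorem zero_token_vertex_confluence_general {V : Type} [DecidableEq V]
    (G : CommGraph V) (hwf : G.WF) (v : V)
    (hgreen : ∃ l, IsSeq G (init G fun _ => 0) l ∧
      (finalSt (init G fun _ => 0) l).col v = Colour.green) :
    ∀ l, IsSeq G (init G fun _ => 0) l →
      MaximalFrom G (finalSt (init G fun _ => 0) l) →
      (finalSt (init G fun _ => 0) l).col v = Colour.green := by
  intro l hseq hmax
  obtain ⟨l₀, hseq₀, hv⟩ := hgreen
  have hinit := init_zero_noTokens G
  obtain ⟨d, h₀d, hd⟩ := Relation.church_rosser (CommGraph.Move.diamond hwf)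
    (hseq₀.reflTransGen_move hinit) (hseq.reflTransGen_move hinit)
  rw [← hmax.eq_of_reflTransGen_move hd]
  exact CommGraph.green_of_reflTransGen_move h₀d hv

/-- **Lemma (zero tokens).** Let `G` be a communication graph with the zero token
assignment. For any vertex `v`, if some colouring sequence colours `v` green, then
no maximal colouring sequence deadlocks before colouring `v` green: every maximal
colouring sequence colours `v` green. -/
theorem zero_token_vertex_confluence {V : Type} [DecidableEq V] [Fintype V]
    (G : CommGraph V) (hwf : G.WF) (v : V)
    (hgreen : ∃ l, IsSeq G (init G fun _ => 0) l ∧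
      (finalSt (init G fun _ => 0) l).col v = Colour.green) :
    ∀ l, IsSeq G (init G fun _ => 0) l →
      MaximalFrom G (finalSt (init G fun _ => 0) l) →
      (finalSt (init G fun _ => 0) l).col v = Colour.green :=
  zero_token_vertex_confluence_general G hwf v hgreen
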